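/- Let J = {1,…,n}, c ∈ ℝ^J and q ∈ ℝ^{J^<}, and define Γ^{c,q}(S) = ∑_{(i,j)∈S^<} q_{i,j} + ∑_{i∈S} c_i for S ⊆ J. For j ∈ J set k_j = 2c_j + ∑_{i<j} q_{i,j} + ∑_{k>j} q_{j,k}. On the vertex set V = {0,1,…,n+1}, define edge weights w by w_{{0,j}} = max(k_j, 0) and w_{{j,n+1}} = max(−k_j, 0) for j ∈ J, w_{{i,j}} = q_{i,j} for (i,j) ∈ J^<, and w_{{0,n+1}} = 0; for disjoint W, W̄ with W ∪ W̄ = V, let w(W, W̄) = ∑_{i∈W, j∈W̄} w_{{i,j}}. Then for every S ⊆ J: Γ^{c,q}(S) = −½ · w(S ∪ {0}, V \ (S ∪ {0})) + (Q + C)/2 + K/4, where Q = ∑_{(i,j)∈J^<} q_{i,j}, C = ∑_{j∈J} c_j, and K = ∑_{j∈J} |k_j|. -/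

import Mathlib

/-!
Write `T = J \ S`, `C(A) = ∑_{j∈A} c_j`, `Q(A) = ∑_{(i,j)∈A^<} q_{i,j}`, and let `X` be the total
`q`-weight of the pairs joining `S` and `T`. The cut consists of the edges `0`–`T`, `S`–`(n+1)` and
`S`–`T`; since `max(k, 0) = (|k| + k)/2`, its weight is `K/2 + (∑_T k − ∑_S k)/2 + X`. Counting
each pair from both ends gives `∑_S k = 2C(S) + 2Q(S) + X` and `∑_T k = 2C(T) + 2Q(T) + X`, and
`Q = Q(S) + Q(T) + X`, so everything except `Γ(S) = Q(S) + C(S)` cancels.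
-/

/-- `Γ^{c,q}(S) = ∑_{(i,j)∈S^<} q_{i,j} + ∑_{i∈S} c_i`. -/
noncomputable def Gamma (c : ℕ → ℝ) (q : ℕ → ℕ → ℝ) (S : Finset ℕ) : ℝ :=
  (∑ i ∈ S, ∑ j ∈ S.filter (fun j => i < j), q i j) + ∑ i ∈ S, c i

/-- `k_j = 2 c_j + ∑_{i<j} q_{i,j} + ∑_{k>j} q_{j,k}` (sums over `{1,…,n}`). -/
noncomputable def kCoef (n : ℕ) (c : ℕ → ℝ) (q : ℕ → ℕ → ℝ) (j : ℕ) : ℝ :=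
  2 * c j + (∑ i ∈ Finset.Ico 1 j, q i j) + (∑ l ∈ Finset.Icc (j + 1) n, q j l)

/-- Weight of the edge `{i,j}` of the separation graph, given for `i < j`:
`w_{{0,j}} = [k_j]^+`, `w_{{j,n+1}} = [k_j]^- = [−k_j]^+`, `w_{{i,j}} = q_{i,j}` for
`(i,j) ∈ J^<`, and `w_{{0,n+1}} = 0`. -/
noncomputable def wOrd (n : ℕ) (c : ℕ → ℝ) (q : ℕ → ℕ → ℝ) (i j : ℕ) : ℝ :=
  if i = 0 then (if j = n + 1 then 0 else max (kCoef n c q j) 0)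
  else if j = n + 1 then max (-(kCoef n c q i)) 0
  else q i j

/-- Symmetrized edge weight, for an arbitrary pair of distinct vertices. -/
noncomputable def wSym (n : ℕ) (c : ℕ → ℝ) (q : ℕ → ℕ → ℝ) (i j : ℕ) : ℝ :=
  if i < j then wOrd n c q i j else if j < i then wOrd n c q j i else 0

open Finset

section PairSums

variable {α M : Type*} [LinearOrder α] [AddCommMonoid M] (q : α → α → M)

def pairSum (s : Finset α) : M :=
  ∑ i ∈ s, ∑ j ∈ s.filter (fun j => i < j), q i j

def incidentSum (s : Finset α) (j : α) : M :=
  ∑ i ∈ s.filter (· < j), q i j + ∑ l ∈ s.filter (j < ·), q j l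

lemma sum_filter_lt_comm (s t : Finset α) (f : α → α → M) :
    ∑ j ∈ s, ∑ i ∈ t.filter (· < j), f i j = ∑ i ∈ t, ∑ j ∈ s.filter (i < ·), f i j := by
  simp_rw [sum_filter]
  exact sum_comm

lemma incidentSum_union {s t : Finset α} (h : Disjoint s t) (j : α) :
    incidentSum q (s ∪ t) j = incidentSum q s j + incidentSum q t j := by
  simp only [incidentSum, filter_union, sum_union (disjoint_filter_filter h)]
  abel

lemma sum_incidentSum_self (s : Finset α) :
    ∑ j ∈ s, incidentSum q s j = pairSum q s + pairSum q s := by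
  simp only [incidentSum, sum_add_distrib, sum_filter_lt_comm, pairSum]

lemma sum_incidentSum_comm (s t : Finset α) :
    ∑ j ∈ s, incidentSum q t j = ∑ j ∈ t, incidentSum q s j := by
  simp only [incidentSum, sum_add_distrib, sum_filter_lt_comm]
  exact add_comm _ _

lemma pairSum_union {s t : Finset α} (h : Disjoint s t) :
    pairSum q (s ∪ t) = pairSum q s + pairSum q t + ∑ j ∈ s, incidentSum q t j := by
  simp only [pairSum, incidentSum, filter_union, sum_union h,
    sum_union (disjoint_filter_filter h), sum_add_distrib, sum_filter_lt_comm]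
  abel

end PairSums

lemma two_mul_sum_max_zero {ι : Type*} (s : Finset ι) (f : ι → ℝ) :
    2 * ∑ j ∈ s, max (f j) 0 = ∑ j ∈ s, |f j| + ∑ j ∈ s, f j := by
  rw [mul_sum, ← sum_add_distrib]
  refine sum_congr rfl fun j _ => ?_
  linarith [max_zero_add_max_neg_zero_eq_abs_self (f j), max_zero_sub_max_neg_zero_eq_self (f j)]

section SeparationGraph

variable {n : ℕ} {c : ℕ → ℝ} {q : ℕ → ℕ → ℝ}

lemma kCoef_eq {j : ℕ} (hj : j ∈ Icc 1 n) :
    kCoef n c q j = 2 * c j + incidentSum q (Icc 1 n) j := by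
  rw [mem_Icc] at hj
  have below : Ico 1 j = (Icc 1 n).filter (· < j) := by ext; simp; omega
  have above : Icc (j + 1) n = (Icc 1 n).filter (j < ·) := by ext; simp; omega
  rw [kCoef, incidentSum, below, above, add_assoc]

lemma sum_kCoef {s : Finset ℕ} (hs : s ⊆ Icc 1 n) :
    ∑ j ∈ s, kCoef n c q j =
      2 * ∑ j ∈ s, c j + 2 * pairSum q s + ∑ j ∈ s, incidentSum q (Icc 1 n \ s) j := by
  have split (j : ℕ) :
      incidentSum q (Icc 1 n) j = incidentSum q s j + incidentSum q (Icc 1 n \ s) j := by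
    rw [← incidentSum_union q disjoint_sdiff, union_sdiff_of_subset hs]
  rw [sum_congr rfl fun j hj => kCoef_eq (hs hj)]
  simp only [split, sum_add_distrib, sum_incidentSum_self, ← mul_sum]
  ring

lemma Icc_sdiff_insert_zero {S : Finset ℕ} (hS : S ⊆ Icc 1 n) :
    Icc 0 (n + 1) \ insert 0 S = insert (n + 1) (Icc 1 n \ S) := by
  ext x
  have hx : x ∈ S → 1 ≤ x ∧ x ≤ n := fun h => mem_Icc.mp (hS h)
  simp only [mem_sdiff, mem_Icc, mem_insert, not_or]
  constructor
  · rintro ⟨hxV, hx0, hxS⟩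
    rcases eq_or_ne x (n + 1) with h | h
    · exact Or.inl h
    · exact Or.inr ⟨by omega, hxS⟩
  · rintro (rfl | ⟨hxJ, hxS⟩)
    · exact ⟨by omega, by omega, fun h => by have := hx h; omega⟩
    · exact ⟨by omega, by omega, hxS⟩

lemma wSym_zero_top : wSym n c q 0 (n + 1) = 0 := by
  simp [wSym, wOrd]

lemma wSym_zero_of_mem {j : ℕ} (hj : j ∈ Icc 1 n) : wSym n c q 0 j = max (kCoef n c q j) 0 := by
  rw [mem_Icc] at hj
  simp [wSym, wOrd, show 0 < j by omega, show j ≠ n + 1 by omega]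

lemma wSym_top_of_mem {i : ℕ} (hi : i ∈ Icc 1 n) :
    wSym n c q i (n + 1) = max (-kCoef n c q i) 0 := by
  rw [mem_Icc] at hi
  simp [wSym, wOrd, show i < n + 1 by omega, show i ≠ 0 by omega]

lemma sum_wSym_of_mem {i : ℕ} {t : Finset ℕ} (hi : i ∈ Icc 1 n) (ht : t ⊆ Icc 1 n)
    (hit : i ∉ t) : ∑ j ∈ t, wSym n c q i j = incidentSum q t i := by
  rw [incidentSum, sum_filter, sum_filter, ← sum_add_distrib]
  refine sum_congr rfl fun j hj => ?_
  have hij : i ≠ j := fun h => hit (h ▸ hj)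
  rw [mem_Icc] at hi
  have := mem_Icc.mp (ht hj)
  rcases hij.lt_or_gt with h | h
  · simp [wSym, wOrd, h, h.not_gt, show i ≠ 0 by omega, show j ≠ n + 1 by omega]
  · simp [wSym, wOrd, h, h.not_gt, show j ≠ 0 by omega, show i ≠ n + 1 by omega]

lemma cut_weight_eq {S : Finset ℕ} (hS : S ⊆ Icc 1 n) :
    ∑ i ∈ insert 0 S, ∑ j ∈ Icc 0 (n + 1) \ insert 0 S, wSym n c q i j =
      ∑ j ∈ Icc 1 n \ S, max (kCoef n c q j) 0 + ∑ i ∈ S, max (-kCoef n c q i) 0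
        + ∑ i ∈ S, incidentSum q (Icc 1 n \ S) i := by
  have h0S : 0 ∉ S := fun h => by simpa using hS h
  have htop : n + 1 ∉ Icc 1 n \ S := by simp
  rw [Icc_sdiff_insert_zero hS, sum_insert h0S, sum_insert htop, wSym_zero_top, zero_add,
    sum_congr rfl fun j hj => wSym_zero_of_mem (sdiff_subset hj), add_assoc, ← sum_add_distrib]
  congr 1
  refine sum_congr rfl fun i hi => ?_
  rw [sum_insert htop, wSym_top_of_mem (hS hi),
    sum_wSym_of_mem (hS hi) sdiff_subset (fun h => (mem_sdiff.mp h).2 hi)]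

end SeparationGraph

/-- for every `S ⊆ J = {1,…,n}`,
`Γ^{c,q}(S) = −½ w(S ∪ {0}, V \ (S ∪ {0})) + (Q+C)/2 + K/4`, where the cut weight is
`w(W,W̄) = ∑_{i∈W, j∈W̄} w_{{i,j}}` on the vertex set `V = {0,1,…,n+1}`,
`Q = ∑_{(i,j)∈J^<} q_{i,j}`, `C = ∑_{j∈J} c_j` and `K = ∑_{j∈J} |k_j|`. -/
theorem stmt_19 (n : ℕ) (c : ℕ → ℝ) (q : ℕ → ℕ → ℝ) :
    ∀ S ⊆ Finset.Icc 1 n,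
      Gamma c q S =
        -(1 / 2) *
            (∑ i ∈ insert 0 S, ∑ j ∈ (Finset.Icc 0 (n + 1)) \ (insert 0 S),
              wSym n c q i j)
          + ((∑ i ∈ Finset.Icc 1 n, ∑ j ∈ (Finset.Icc 1 n).filter (fun j => i < j), q i j)
              + ∑ j ∈ Finset.Icc 1 n, c j) / 2
          + (∑ j ∈ Finset.Icc 1 n, |kCoef n c q j|) / 4 := by
  intro S hS
  have hkS := sum_kCoef (c := c) (q := q) hS
  have hkT := sum_kCoef (c := c) (q := q) (sdiff_subset : Icc 1 n \ S ⊆ Icc 1 n)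
  rw [Finset.sdiff_sdiff_eq_self hS, sum_incidentSum_comm] at hkT
  have hJ := (union_sdiff_of_subset hS).symm
  have hST : Disjoint S (Icc 1 n \ S) := disjoint_sdiff
  rw [cut_weight_eq hS, Gamma, ← pairSum, ← pairSum]
  generalize Icc 1 n \ S = T at *
  have hposT := two_mul_sum_max_zero T (kCoef n c q)
  have hnegS := two_mul_sum_max_zero S (fun j => -kCoef n c q j)
  simp only [abs_neg, sum_neg_distrib] at hnegS
  rw [hJ, pairSum_union q hST, sum_union hST, sum_union hST]
  linarith
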